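/- arXiv:1912.01174 — 2 statements merged into one kernel-verified Lean document; each statement's English description precedes it below -/
import Mathlib

section
/- Let M be a real 2m×2m matrix satisfying M^T J₀ M = C · J₀ with C > 1. Then the number of eigenvalues of M (counted with algebraic multiplicity) of modulus strictly less than 1 is at most m. -/
/-!
If `Mᵀ J M = C J` with `J` invertible, then `Mᵀ J (x - M) = (x M - C)ᵀ J`, and taking determinants
gives `x ^ n χ(C / x) = χ(0) χ(x)` for the characteristic polynomial `χ` of `M`. Hence the roots
of `χ` are invariant, with multiplicity, under the involution `μ ↦ C / μ`. Since `C > 1`, this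
involution maps the roots inside the unit disc to roots outside it, so at most half of the `2m`
roots lie inside.
-/

open Matrix Polynomial

namespace Polynomial

theorem roots_map_div_eq_self {K : Type*} [Field K] [IsAlgClosed K] {p : K[X]}
    (hp : p.Monic) (h0 : p.eval 0 ≠ 0) {c : K}
    (h : ∀ x ≠ 0, x ^ p.natDegree * p.eval (c / x) = p.eval 0 * p.eval x) :
    p.roots.map (c / ·) = p.roots := by
  have hsplit := IsAlgClosed.splits p
  have hroot_ne : ∀ μ ∈ p.roots, μ ≠ 0 := by
    rintro μ hμ rfl
    exact h0 (isRoot_of_mem_roots hμ)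
  have hpq : p = ((p.roots.map (c / ·)).map (X - C ·)).prod := by
    refine eq_of_infinite_eval_eq _ _ (Set.infinite_of_finite_compl
      ((Set.finite_singleton 0).subset fun x hx => ?_))
    by_contra hx0
    replace hx0 : x ≠ 0 := hx0
    refine hx (mul_left_cancel₀ h0 ?_)
    have hprod : ∀ y, p.eval y = (p.roots.map (y - ·)).prod :=
      hsplit.eval_eq_prod_roots_of_monic hp
    rw [← h x hx0, eval_multiset_prod, Multiset.map_map, Multiset.map_map, hprod, hprod,
      hsplit.natDegree_eq_card_roots, ← Multiset.prod_replicate, ← Multiset.map_const',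
      ← Multiset.prod_map_mul, ← Multiset.prod_map_mul]
    refine congrArg Multiset.prod (Multiset.map_congr rfl fun μ hμ => ?_)
    have := hroot_ne μ hμ
    simp only [Function.comp_apply, eval_sub, eval_X, eval_C]
    field_simp
    ring
  conv_rhs => rw [hpq]
  exact (roots_multiset_prod_X_sub_C _).symm

end Polynomial

namespace Matrix

theorem map_transpose_mul_mul_eq_smul {n R S : Type*} [Fintype n] [CommRing R] [CommRing S]
    {A J : Matrix n n R} {c : R} (h : Aᵀ * J * A = c • J) (f : R →+* S) :
    (A.map f)ᵀ * J.map f * A.map f = f c • J.map f := by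
  have := congrArg (Matrix.map · f) h
  simp only [Matrix.map_mul, transpose_map] at this
  rw [this]
  ext i j
  simp

variable {n K : Type*} [Fintype n] [DecidableEq n] [Field K] {A J : Matrix n n K} {c : K}

theorem eval_charpoly_eq_det_smul_one_sub (A : Matrix n n K) (x : K) :
    A.charpoly.eval x = (x • 1 - A).det := by
  rw [eval_charpoly, scalar_apply, smul_one_eq_diagonal]

theorem pow_mul_eval_charpoly_div_of_transpose_mul_mul_eq_smul (hJ : J.det ≠ 0)
    (h : Aᵀ * J * A = c • J) {x : K} (hx : x ≠ 0) :
    x ^ Fintype.card n * A.charpoly.eval (c / x) = A.charpoly.eval 0 * A.charpoly.eval x := by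
  have hconj : Aᵀ * J * (x • 1 - A) = (x • A - c • 1)ᵀ * J := by
    rw [mul_sub, h, transpose_sub, transpose_smul, transpose_smul, transpose_one, sub_mul,
      Matrix.mul_smul, mul_one, smul_mul, smul_mul, one_mul]
  have hscale : x • A - c • 1 = (-x) • ((c / x) • 1 - A) := by
    rw [smul_sub, smul_smul, neg_mul, mul_div_cancel₀ _ hx]
    module
  have hdet : A.det * A.charpoly.eval x = (-x) ^ Fintype.card n * A.charpoly.eval (c / x) := by
    have := congrArg det hconj
    rw [det_mul, det_mul, det_mul, det_transpose, det_transpose, hscale, det_smul] at this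
    rw [eval_charpoly_eq_det_smul_one_sub, eval_charpoly_eq_det_smul_one_sub]
    exact mul_right_cancel₀ hJ (by linear_combination this)
  rw [eval_charpoly_eq_det_smul_one_sub A 0, zero_smul, zero_sub, det_neg, mul_assoc, hdet,
    ← mul_assoc, ← mul_pow, neg_one_mul, neg_neg]

theorem eval_zero_charpoly_ne_zero_of_transpose_mul_mul_eq_smul (hJ : J.det ≠ 0) (hc : c ≠ 0)
    (h : Aᵀ * J * A = c • J) : A.charpoly.eval 0 ≠ 0 := by
  have hdet := congrArg det h
  rw [det_mul, det_mul, det_transpose, det_smul] at hdet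
  have hA : A.det ≠ 0 := fun hA => by
    simp [hA, hc, hJ] at hdet
  rw [eval_charpoly_eq_det_smul_one_sub, zero_smul, zero_sub, det_neg]
  exact mul_ne_zero (pow_ne_zero _ (neg_ne_zero.mpr one_ne_zero)) hA

theorem roots_charpoly_map_div_of_transpose_mul_mul_eq_smul [IsAlgClosed K] (hJ : J.det ≠ 0)
    (hc : c ≠ 0) (h : Aᵀ * J * A = c • J) :
    A.charpoly.roots.map (c / ·) = A.charpoly.roots :=
  roots_map_div_eq_self A.charpoly_monic
    (eval_zero_charpoly_ne_zero_of_transpose_mul_mul_eq_smul hJ hc h) fun x hx => by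
      rw [charpoly_natDegree_eq_dim]
      exact pow_mul_eval_charpoly_div_of_transpose_mul_mul_eq_smul hJ h hx

end Matrix

theorem Multiset.two_mul_card_filter_norm_lt_one_le {𝕜 : Type*} [NormedDivisionRing 𝕜]
    {R : Multiset 𝕜} {c : 𝕜} (hc : 1 ≤ ‖c‖) (h0 : (0 : 𝕜) ∉ R) (hR : R.map (c / ·) = R) :
    2 * (R.filter (‖·‖ < 1)).card ≤ R.card := by
  have hinv : (R.filter (‖·‖ < 1)).card = (R.filter fun μ => ‖c / μ‖ < 1).card := by
    conv_lhs => rw [← hR]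
    rw [Multiset.filter_map, Multiset.card_map]
    rfl
  have hdisj : R.filter (fun μ => ‖μ‖ < 1 ∧ ‖c / μ‖ < 1) = 0 := by
    refine Multiset.filter_eq_nil.mpr fun μ hμ ⟨hlt, hdiv⟩ => ?_
    have hμ : 0 < ‖μ‖ := norm_pos_iff.mpr fun h => h0 (h ▸ hμ)
    rw [norm_div, div_lt_one hμ] at hdiv
    linarith
  have hsum := Multiset.filter_add_filter (fun μ => ‖μ‖ < 1) (fun μ => ‖c / μ‖ < 1) R
  rw [hdisj, add_zero] at hsum
  calc 2 * (R.filter (‖·‖ < 1)).card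
      = (R.filter (‖·‖ < 1) + R.filter fun μ => ‖c / μ‖ < 1).card := by
        rw [Multiset.card_add, ← hinv, two_mul]
    _ ≤ R.card := hsum ▸ Multiset.card_le_card (Multiset.filter_le _ R)

/-- If `M` is a real `2m × 2m` matrix with `Mᵀ J₀ M = C • J₀` for some
`C > 1`, then the number of eigenvalues of `M` (counted with algebraic multiplicity,
i.e. counted in the multiset of complex roots of the characteristic polynomial)
of modulus strictly less than `1` is at most `m`. -/
theorem conformal_symplectic_eigenvalues_modulus_lt_one (m : ℕ) (C : ℝ) (hC : 1 < C)
    (M : Matrix (Fin m ⊕ Fin m) (Fin m ⊕ Fin m) ℝ)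
    (hconf : Mᵀ * Matrix.J (Fin m) ℝ * M = C • Matrix.J (Fin m) ℝ) :
    (((M.map (algebraMap ℝ ℂ)).charpoly.roots.filter
      (fun μ => ‖μ‖ < 1)).card ≤ m) := by
  have hJ' : ((J (Fin m) ℝ).map (algebraMap ℝ ℂ)).det ≠ 0 := by
    rw [← RingHom.mapMatrix_apply, ← RingHom.map_det]
    simp [(isUnit_det_J (Fin m) ℝ).ne_zero]
  set N := M.map (algebraMap ℝ ℂ)
  set J' := (J (Fin m) ℝ).map (algebraMap ℝ ℂ)
  have hC' : (C : ℂ) ≠ 0 := Complex.ofReal_ne_zero.mpr (by positivity)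
  have hconf' : Nᵀ * J' * N = (C : ℂ) • J' := map_transpose_mul_mul_eq_smul hconf _
  have h0 : (0 : ℂ) ∉ N.charpoly.roots := fun h =>
    eval_zero_charpoly_ne_zero_of_transpose_mul_mul_eq_smul hJ' hC' hconf'
      (isRoot_of_mem_roots h)
  have hcount := Multiset.two_mul_card_filter_norm_lt_one_le
    (by simpa [abs_of_pos (zero_lt_one.trans hC)] using hC.le) h0
    (roots_charpoly_map_div_of_transpose_mul_mul_eq_smul hJ' hC' hconf')
  rw [IsAlgClosed.card_roots_eq_natDegree, charpoly_natDegree_eq_dim, Fintype.card_sum,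
    Fintype.card_fin] at hcount
  omega
end

section
/- Let M be a real 2m×2m matrix with M^T J₀ M = C·J₀ for C > 1, and suppose no eigenvalue of M has modulus 1 or equals 0. Define E⁻ as the sum of generalized eigenspaces for eigenvalues of modulus < 1. Then dim E⁻ ≤ m. -/
/-!
The relation `Mᵀ J M = C J` says that `J M J⁻¹ = C (Mᵀ)⁻¹`. Since `g f = c` forces the
generalized eigenspace of `f` at `μ` to coincide with that of `g` at `c / μ`, and `Mᵀ` has the
same characteristic polynomial as `M`, the eigenvalues `μ` and `C / μ` of `M` have equal
algebraic multiplicities. As `C > 1` and `0` is not an eigenvalue, `μ ↦ C / μ` sends the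
eigenvalues inside the unit disc injectively to eigenvalues outside it, so those inside carry at
most half of the `2m` roots of the characteristic polynomial, and `dim E⁻` is bounded by their
number.
-/

open Matrix Polynomial Module

namespace Multiset

theorem two_mul_card_filter_le_card {α : Type*} [DecidableEq α] {s : Multiset α} {σ : α → α}
    (hσ : Function.Involutive σ) (hs : ∀ a, s.count (σ a) = s.count a)
    (p : α → Prop) [DecidablePred p] (hp : ∀ a ∈ s, p a → ¬ p (σ a)) :
    2 * (s.filter p).card ≤ s.card := by
  have hmap : s.map σ = s := ext' fun a => by
    conv_lhs => rw [← hσ a]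
    rw [count_map_eq_count' _ _ hσ.injective, hs]
  have himage : (s.filter p).map σ = s.filter (p ∘ σ) := by
    conv_rhs => rw [← hmap, filter_map]
    simp only [Function.comp_def, hσ _]
  have hflip : s.filter (p ∘ σ) ≤ s.filter (¬ p ·) := by
    have hσs : ∀ a ∈ s, σ a ∈ s := fun a ha => hmap ▸ mem_map_of_mem σ ha
    calc s.filter (p ∘ σ) = (s.filter (p ∘ σ)).filter (¬ p ·) := by
          refine (filter_eq_self.mpr fun a ha => ?_).symm
          rw [mem_filter] at ha
          simpa [hσ a] using hp (σ a) (hσs a ha.1) ha.2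
      _ ≤ s.filter (¬ p ·) := filter_le_filter _ (filter_le _ _)
  have hcard := congrArg card (filter_add_not p s)
  rw [card_add] at hcard
  have := card_le_card hflip
  rw [← himage, card_map] at this
  omega

end Multiset

theorem Submodule.finrank_biSup_le_sum {K V ι : Type*} [DivisionRing K] [AddCommGroup V]
    [Module K V] [FiniteDimensional K V] (s : Finset ι) (W : ι → Submodule K V) :
    finrank K ↥(⨆ i ∈ s, W i) ≤ ∑ i ∈ s, finrank K ↥(W i) := by
  classical
  induction s using Finset.induction_on with
  | empty => simp
  | insert a s ha ih =>
    rw [Finset.iSup_insert, Finset.sum_insert ha]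
    exact (Submodule.finrank_add_le_finrank_add_finrank _ _).trans (Nat.add_le_add_left ih _)

namespace Module.End

variable {K V : Type*} [Field K] [AddCommGroup V] [Module K V]

theorem maxGenEigenspace_le_of_mul_eq_smul_one {f g : End K V} {c μ : K} (hμ : μ ≠ 0)
    (hgf : g * f = c • 1) (hfg : f * g = c • 1) :
    f.maxGenEigenspace μ ≤ g.maxGenEigenspace (c / μ) := by
  have hfactor : g - (c / μ) • 1 = (-μ⁻¹) • (g * (f - μ • 1)) := by
    rw [mul_sub, hgf, mul_smul_comm, mul_one]
    match_scalars <;> field_simp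
  have hcomm : Commute g (f - μ • 1) :=
    (Commute.sub_right (hgf.trans hfg.symm) (Commute.smul_right (Commute.one_right g) μ))
  intro x hx
  rw [mem_maxGenEigenspace] at hx ⊢
  obtain ⟨k, hk⟩ := hx
  refine ⟨k, ?_⟩
  rw [hfactor, _root_.smul_pow, hcomm.mul_pow, LinearMap.smul_apply, mul_apply, hk,
    map_zero, smul_zero]

theorem maxGenEigenspace_div_eq_of_mul_eq_smul_one {f g : End K V} {c μ : K} (hc : c ≠ 0)
    (hμ : μ ≠ 0) (hgf : g * f = c • 1) (hfg : f * g = c • 1) :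
    g.maxGenEigenspace (c / μ) = f.maxGenEigenspace μ :=
  le_antisymm (by simpa only [div_div_cancel₀ hc] using
      maxGenEigenspace_le_of_mul_eq_smul_one (div_ne_zero hc hμ) hfg hgf)
    (maxGenEigenspace_le_of_mul_eq_smul_one hμ hgf hfg)

theorem finrank_iSup_maxGenEigenspace_le [FiniteDimensional K V] (f : End K V)
    (p : K → Prop) [DecidablePred p] :
    finrank K ↥(⨆ (μ : K) (_ : p μ), f.maxGenEigenspace μ)
      ≤ (f.charpoly.roots.filter p).card := by
  classical
  set S := (f.charpoly.roots.filter p).toFinset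
  have hle : ⨆ (μ : K) (_ : p μ), f.maxGenEigenspace μ ≤ ⨆ μ ∈ S, f.maxGenEigenspace μ := by
    refine iSup₂_le fun μ hμ => ?_
    by_cases hroot : μ ∈ f.charpoly.roots
    · exact le_biSup f.maxGenEigenspace
        (Multiset.mem_toFinset.mpr (Multiset.mem_filter.mpr ⟨hroot, hμ⟩))
    · have : finrank K ↥(f.maxGenEigenspace μ) = 0 := by
        rw [LinearMap.finrank_maxGenEigenspace_eq, ← count_roots, Multiset.count_eq_zero.mpr hroot]
      rw [Submodule.finrank_eq_zero.mp this]
      exact bot_le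
  calc finrank K ↥(⨆ (μ : K) (_ : p μ), f.maxGenEigenspace μ)
      ≤ ∑ μ ∈ S, finrank K ↥(f.maxGenEigenspace μ) :=
        (Submodule.finrank_mono hle).trans (Submodule.finrank_biSup_le_sum S _)
    _ = ∑ μ ∈ S, (f.charpoly.roots.filter p).count μ := by
        refine Finset.sum_congr rfl fun μ hμ => ?_
        rw [Multiset.mem_toFinset, Multiset.mem_filter] at hμ
        rw [LinearMap.finrank_maxGenEigenspace_eq, ← count_roots,
          Multiset.count_filter_of_pos hμ.2]
    _ = (f.charpoly.roots.filter p).card := Multiset.toFinset_sum_count_eq _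

end Module.End

namespace Matrix

variable {K ι : Type*} [Field K] [Fintype ι] [DecidableEq ι]

theorem rootMultiplicity_charpoly_div_of_mul_eq_smul_one {A B : Matrix ι ι K} {c : K}
    (hc : c ≠ 0) (hAB : A * B = c • 1) {μ : K} (hμ : μ ≠ 0) :
    B.charpoly.rootMultiplicity (c / μ) = A.charpoly.rootMultiplicity μ := by
  have hBA : B * A = c • 1 := by
    have : A * (c⁻¹ • B) = 1 := by rw [mul_smul_comm, hAB, smul_smul, inv_mul_cancel₀ hc, one_smul]
    rw [← smul_right_inj (inv_ne_zero hc), ← smul_mul_assoc, mul_eq_one_comm.mp this, smul_smul,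
      inv_mul_cancel₀ hc, one_smul]
  have hlin : ∀ {X Y : Matrix ι ι K}, X * Y = c • 1 → toLin' X * toLin' Y = c • 1 := by
    intro X Y h
    rw [Module.End.mul_eq_comp, ← toLin'_mul, h, map_smul, toLin'_one, Module.End.one_eq_id]
  rw [← charpoly_toLin', ← charpoly_toLin', ← LinearMap.finrank_maxGenEigenspace_eq,
    ← LinearMap.finrank_maxGenEigenspace_eq,
    Module.End.maxGenEigenspace_div_eq_of_mul_eq_smul_one hc hμ (hlin hBA) (hlin hAB)]

theorem rootMultiplicity_charpoly_div_of_conformal {l : Type*} [Fintype l] [DecidableEq l]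
    {A : Matrix (l ⊕ l) (l ⊕ l) K} {c : K} (hc : c ≠ 0) (hA : Aᵀ * J l K * A = c • J l K)
    (μ : K) : A.charpoly.rootMultiplicity (c / μ) = A.charpoly.rootMultiplicity μ := by
  rcases eq_or_ne μ 0 with rfl | hμ
  · rw [div_zero]
  have hconj : (J l K * (A * -J l K)).charpoly = A.charpoly := by
    rw [charpoly_mul_comm, mul_assoc, neg_mul, J_squared, neg_neg, mul_one]
  -- `-J = J⁻¹`, so this is the conjugate `J A J⁻¹`, which `hA` turns into `c • (Aᵀ)⁻¹`.
  have hprod : Aᵀ * (J l K * (A * -J l K)) = c • 1 := by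
    rw [← mul_assoc, ← mul_assoc, mul_neg, hA, smul_mul_assoc, J_squared, smul_neg, neg_neg]
  have := rootMultiplicity_charpoly_div_of_mul_eq_smul_one hc hprod hμ
  rwa [hconj, charpoly_transpose] at this

end Matrix

/-- If `M` is a real `2m × 2m` matrix with `Mᵀ J₀ M = C • J₀` for
`C > 1`, and no (complex) eigenvalue of `M` has modulus `1` or equals `0`, then the
sum `E⁻` of the generalized eigenspaces (of the complexification of `M`) for
eigenvalues of modulus `< 1` has dimension at most `m`. -/
theorem conformal_symplectic_stable_space_dim_le (m : ℕ) (C : ℝ) (hC : 1 < C)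
    (M : Matrix (Fin m ⊕ Fin m) (Fin m ⊕ Fin m) ℝ)
    (hconf : Mᵀ * Matrix.J (Fin m) ℝ * M = C • Matrix.J (Fin m) ℝ)
    (hhyp : ∀ μ : ℂ, (M.map (algebraMap ℝ ℂ)).charpoly.IsRoot μ →
      ‖μ‖ ≠ 1 ∧ μ ≠ 0) :
    Module.finrank ℂ
      ↥(⨆ (μ : ℂ) (_ : ‖μ‖ < 1),
        Module.End.maxGenEigenspace (Matrix.toLin' (M.map (algebraMap ℝ ℂ))) μ) ≤ m := by
  set A := M.map (algebraMap ℝ ℂ)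
  have hC0 : (C : ℂ) ≠ 0 := Complex.ofReal_ne_zero.mpr (by positivity)
  have hconfC : Aᵀ * J (Fin m) ℂ * A = (C : ℂ) • J (Fin m) ℂ := by
    have h := congrArg (·.map (algebraMap ℝ ℂ)) hconf
    simp only [Matrix.map_mul, map_J, map_smul' _ _ _ (map_mul _)] at h
    exact h
  have hcard : A.charpoly.roots.card = 2 * m := by
    rw [IsAlgClosed.card_roots_eq_natDegree, charpoly_natDegree_eq_dim, Fintype.card_sum,
      Fintype.card_fin, two_mul]
  have hstable : ∀ μ ∈ A.charpoly.roots, ‖μ‖ < 1 → ¬ ‖(C : ℂ) / μ‖ < 1 := by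
    intro μ hμ hlt
    have hμ0 : 0 < ‖μ‖ := norm_pos_iff.mpr (hhyp μ (isRoot_of_mem_roots hμ)).2
    rw [not_lt, norm_div, Complex.norm_real, Real.norm_of_nonneg (by positivity),
      one_le_div hμ0]
    linarith
  have hpaired := Multiset.two_mul_card_filter_le_card (fun μ => div_div_cancel₀ hC0)
    (fun μ => by
      rw [count_roots, count_roots, rootMultiplicity_charpoly_div_of_conformal hC0 hconfC])
    (fun μ => ‖μ‖ < 1) hstable
  have hdim := Module.End.finrank_iSup_maxGenEigenspace_le (toLin' A) (fun μ => ‖μ‖ < 1)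
  rw [charpoly_toLin'] at hdim
  omega
end
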